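/- arXiv:2601.16354 — 3 statements merged into one kernel-verified Lean document; each statement's English description precedes it below -/
import Mathlib

section
/- Suppose ε ≥ (1/m)·(Δmax − Δmin) and the parameter β satisfies ln(n−1) + ln( (max_{k∈V\{t}} w_k) / (Σ_{l∈V} w_l) ) ≤ β ≤ ε + ln(n−1) + ln( (min_{k∈V\{t}} w_k) / (Σ_{l∈V} w_l) ). Then for every k ∈ V\{t} the ARR output probabilities satisfy q_k ≤ p and p ≤ e^ε · q_k; consequently the ratio of any two output probabilities of the mechanism is at most e^ε (the mechanism is ε-indistinguishable at this feature). -/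
/-- Theorem 1 of the paper (feasible β yields ε-indistinguishability of ARR):
if ε ≥ (1/m)(Δmax − Δmin) and β lies between the feasibility bounds, then every
replacement probability q_k is at most the keep probability p, p ≤ e^ε·q_k, and
consequently the ratio of any two output probabilities of the mechanism is at
most e^ε. -/
theorem stmt_0 {V : Type*} [Fintype V] [DecidableEq V]
    (t : V) (hn : 2 ≤ Fintype.card V)
    (hne : (Finset.univ.erase t).Nonempty)
    (m : ℝ) (hm : 0 < m)
    (e Δ w : V → ℝ)
    (hΔ : ∀ k, Δ k = |e t - e k|)
    (hw : ∀ k, w k = Real.exp (-(Δ k) / m))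
    (β ε : ℝ) (hε0 : 0 ≤ ε)
    (p : ℝ) (hp : p = Real.exp β / (Real.exp β + ((Fintype.card V : ℝ) - 1)))
    (q : V → ℝ)
    (hq : ∀ k, q k = ((Fintype.card V : ℝ) - 1) * (w k / ∑ l, w l) /
      (Real.exp β + ((Fintype.card V : ℝ) - 1)))
    (hε : (1 / m) * ((Finset.univ.erase t).sup' hne Δ - (Finset.univ.erase t).inf' hne Δ) ≤ ε)
    (hβlo : Real.log ((Fintype.card V : ℝ) - 1) +
      Real.log ((Finset.univ.erase t).sup' hne w / ∑ l, w l) ≤ β)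
    (hβhi : β ≤ ε + Real.log ((Fintype.card V : ℝ) - 1) +
      Real.log ((Finset.univ.erase t).inf' hne w / ∑ l, w l)) :
    (∀ k ∈ Finset.univ.erase t, q k ≤ p ∧ p ≤ Real.exp ε * q k) ∧
    (∀ k k' : V,
      (if k = t then p else q k) ≤ Real.exp ε * (if k' = t then p else q k')) := by
  have hn1 : (0:ℝ) < (Fintype.card V : ℝ) - 1 := by
    have : (2:ℝ) ≤ (Fintype.card V : ℝ) := by exact_mod_cast hn
    linarith
  have hwpos : ∀ k, 0 < w k := fun k => by rw [hw]; exact Real.exp_pos _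
  have hNe : Nonempty V := Fintype.card_pos_iff.mp (by omega)
  have hS : 0 < ∑ l, w l := Finset.sum_pos (fun l _ => hwpos l) Finset.univ_nonempty
  obtain ⟨k0, hk0⟩ := id hne
  have hsup_pos : 0 < (Finset.univ.erase t).sup' hne w :=
    lt_of_lt_of_le (hwpos k0) (Finset.le_sup' w hk0)
  have hinf_pos : 0 < (Finset.univ.erase t).inf' hne w :=
    (Finset.lt_inf'_iff hne).mpr (fun k _ => hwpos k)
  have hD : (0:ℝ) < Real.exp β + ((Fintype.card V : ℝ) - 1) := by
    have := Real.exp_pos β; linarith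
  have hlo : ((Fintype.card V:ℝ)-1) * ((Finset.univ.erase t).sup' hne w / ∑ l, w l)
      ≤ Real.exp β := by
    have h := Real.exp_le_exp.mpr hβlo
    rwa [Real.exp_add, Real.exp_log hn1, Real.exp_log (div_pos hsup_pos hS)] at h
  have hhi : Real.exp β ≤ Real.exp ε *
      (((Fintype.card V:ℝ)-1) * ((Finset.univ.erase t).inf' hne w / ∑ l, w l)) := by
    have h := Real.exp_le_exp.mpr hβhi
    rwa [Real.exp_add, Real.exp_add, Real.exp_log hn1,
      Real.exp_log (div_pos hinf_pos hS), mul_assoc] at h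
  have main : ∀ k ∈ Finset.univ.erase t, q k ≤ p ∧ p ≤ Real.exp ε * q k := by
    intro k hk
    have hwk_le : w k ≤ (Finset.univ.erase t).sup' hne w := Finset.le_sup' w hk
    have hwk_ge : (Finset.univ.erase t).inf' hne w ≤ w k := Finset.inf'_le w hk
    constructor
    · rw [hq, hp]
      gcongr
      calc ((Fintype.card V:ℝ)-1) * (w k / ∑ l, w l)
          ≤ ((Fintype.card V:ℝ)-1) * ((Finset.univ.erase t).sup' hne w / ∑ l, w l) := by
            gcongr
        _ ≤ Real.exp β := hlo
    · rw [hq, hp, ← mul_div_assoc]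
      gcongr
      calc Real.exp β
          ≤ Real.exp ε * (((Fintype.card V:ℝ)-1) *
              ((Finset.univ.erase t).inf' hne w / ∑ l, w l)) := hhi
        _ ≤ Real.exp ε * (((Fintype.card V:ℝ)-1) * (w k / ∑ l, w l)) := by
            have := Real.exp_pos ε
            gcongr
  refine ⟨main, ?_⟩
  have hppos : 0 < p := by rw [hp]; exact div_pos (Real.exp_pos β) hD
  have hexp1 : 1 ≤ Real.exp ε := Real.one_le_exp hε0
  intro k k'
  by_cases hk : k = t <;> by_cases hk' : k' = t <;>
    simp only [hk, hk', if_pos, if_neg, if_true, ite_true, ite_false] <;>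
    [skip; skip; skip; skip]
  · nlinarith
  · exact (main k' (Finset.mem_erase.mpr ⟨hk', Finset.mem_univ _⟩)).2
  · have h1 := (main k (Finset.mem_erase.mpr ⟨hk, Finset.mem_univ _⟩)).1
    nlinarith
  · exact le_trans (main k (Finset.mem_erase.mpr ⟨hk, Finset.mem_univ _⟩)).1
      (main k' (Finset.mem_erase.mpr ⟨hk', Finset.mem_univ _⟩)).2
end

section
/- The keep probability is at most e^ε times every replacement probability, i.e. p ≤ e^ε · q_k for all k ∈ V\{t}, if and only if β ≤ ε + ln(n−1) + ln( (min_{k∈V\{t}} w_k) / (Σ_{l∈V} w_l) ). -/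
/-! Both `p` and every `q k` carry the normaliser `e^β + (n - 1)`, so `p ≤ e^ε q k` says
`e^β ≤ e^ε (n - 1) w_k / Σ w`. The right-hand side is increasing in `w_k`, so the family of
these conditions over `k ≠ t` is equivalent to the one at the token minimising `w_k`; taking
logarithms gives the bound on `β`. -/

theorem Finset.forall_le_apply_iff_le_apply_inf' {ι α β : Type*} [LinearOrder α] [Preorder β]
    {s : Finset ι} (hs : s.Nonempty) {f : ι → α} {g : α → β} (hg : Monotone g) {a : β} :
    (∀ i ∈ s, a ≤ g (f i)) ↔ a ≤ g (s.inf' hs f) := by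
  refine ⟨fun h => ?_, fun h i hi => h.trans (hg (s.inf'_le f hi))⟩
  obtain ⟨i, hi, hmin⟩ := s.exists_mem_eq_inf' hs f
  exact hmin ▸ h i hi

theorem Real.exp_le_exp_mul_mul_iff {β ε c r : ℝ} (hc : 0 < c) (hr : 0 < r) :
    Real.exp β ≤ Real.exp ε * c * r ↔ β ≤ ε + Real.log c + Real.log r := by
  rw [← Real.exp_le_exp (x := β), Real.exp_add, Real.exp_add, Real.exp_log hc, Real.exp_log hr]

theorem stmt_2_general {V : Type*} [Fintype V] [DecidableEq V]
    (t : V) (hn : 2 ≤ Fintype.card V)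
    (hne : (Finset.univ.erase t).Nonempty)
    (m : ℝ)
    (Δ w : V → ℝ)
    (hw : ∀ k, w k = Real.exp (-(Δ k) / m))
    (β ε : ℝ)
    (p : ℝ) (hp : p = Real.exp β / (Real.exp β + ((Fintype.card V : ℝ) - 1)))
    (q : V → ℝ)
    (hq : ∀ k, q k = ((Fintype.card V : ℝ) - 1) * (w k / ∑ l, w l) /
      (Real.exp β + ((Fintype.card V : ℝ) - 1))) :
    (∀ k ∈ Finset.univ.erase t, p ≤ Real.exp ε * q k) ↔
      β ≤ ε + Real.log ((Fintype.card V : ℝ) - 1) +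
        Real.log ((Finset.univ.erase t).inf' hne w / ∑ l, w l) := by
  set c : ℝ := (Fintype.card V : ℝ) - 1
  have hc : 0 < c := by
    have : (2 : ℝ) ≤ Fintype.card V := by exact_mod_cast hn
    linarith
  have hw_pos : ∀ k, 0 < w k := fun k => hw k ▸ Real.exp_pos _
  have hsum_pos : 0 < ∑ l, w l := Finset.sum_pos (fun l _ => hw_pos l) ⟨t, Finset.mem_univ t⟩
  have hinf_pos : 0 < (Finset.univ.erase t).inf' hne w :=
    (Finset.lt_inf'_iff hne).2 fun k _ => hw_pos k
  have hbound_mono : Monotone fun x => Real.exp ε * c * (x / ∑ l, w l) := fun x y hxy => by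
    dsimp only
    gcongr
  calc (∀ k ∈ Finset.univ.erase t, p ≤ Real.exp ε * q k)
      ↔ ∀ k ∈ Finset.univ.erase t, Real.exp β ≤ Real.exp ε * c * (w k / ∑ l, w l) := by
        refine forall₂_congr fun k _ => ?_
        rw [hp, hq, ← mul_div_assoc, ← mul_assoc, div_le_div_iff_of_pos_right (by positivity)]
    _ ↔ Real.exp β ≤ Real.exp ε * c * ((Finset.univ.erase t).inf' hne w / ∑ l, w l) :=
        Finset.forall_le_apply_iff_le_apply_inf' hne hbound_mono
    _ ↔ _ := Real.exp_le_exp_mul_mul_iff hc (div_pos hinf_pos hsum_pos)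

/-- The keep probability p of ARR is at most e^ε times every replacement
probability q_k (for k ∈ V \ {t}) if and only if
β ≤ ε + ln(n−1) + ln(min_{k∈V\{t}} w_k / Σ_{l∈V} w_l). -/
theorem stmt_2 {V : Type*} [Fintype V] [DecidableEq V]
    (t : V) (hn : 2 ≤ Fintype.card V)
    (hne : (Finset.univ.erase t).Nonempty)
    (m : ℝ) (hm : 0 < m)
    (e Δ w : V → ℝ)
    (hΔ : ∀ k, Δ k = |e t - e k|)
    (hw : ∀ k, w k = Real.exp (-(Δ k) / m))
    (β ε : ℝ) (hε0 : 0 ≤ ε)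
    (p : ℝ) (hp : p = Real.exp β / (Real.exp β + ((Fintype.card V : ℝ) - 1)))
    (q : V → ℝ)
    (hq : ∀ k, q k = ((Fintype.card V : ℝ) - 1) * (w k / ∑ l, w l) /
      (Real.exp β + ((Fintype.card V : ℝ) - 1))) :
    (∀ k ∈ Finset.univ.erase t, p ≤ Real.exp ε * q k) ↔
      β ≤ ε + Real.log ((Fintype.card V : ℝ) - 1) +
        Real.log ((Finset.univ.erase t).inf' hne w / ∑ l, w l) :=
  stmt_2_general t hn hne m Δ w hw β ε p hp q hq
end

section
/- Prompt-level reconstruction bound (Proposition 1): let n ≥ 3, ψ = n − 1, ε ≥ 0, A = (ψ·e^ε + 1)/(ψ·e^ε + ψ²), B = ψ·e^ε/(ψ·e^ε + 1). Let L be a natural number (the prompt length) and c_1, …, c_L real numbers with 1/(1 + ψ·e^ε) ≤ c_j ≤ e^ε/(e^ε + ψ) for every j (the per-token probabilities of correct reconstruction, bounded as in Theorem 3). Then for every subset S of {1, …, L} and every natural number r with r ≤ |S|, the probability of the reconstruction pattern that is correct exactly on S, namely Π_{j∈S} c_j · Π_{j∉S} (1 − c_j), is at most A^r · B^{L−r}.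 In particular, the probability of reconstructing a prompt of length L with at least a fraction ρ of correct tokens (Bleu ≥ ρ), r = ρ·L, is at most ((ψ·e^ε + 1)/(ψ·e^ε + ψ²))^{ρL} · (ψ·e^ε/(ψ·e^ε + 1))^{(1−ρ)L}. -/
/-- Prompt-level reconstruction bound (Proposition 1): with n ≥ 3, ψ = n − 1,
ε ≥ 0, A = (ψe^ε+1)/(ψe^ε+ψ²), B = ψe^ε/(ψe^ε+1), and per-token correct
reconstruction probabilities c_j satisfying 1/(1+ψe^ε) ≤ c_j ≤ e^ε/(e^ε+ψ),
the probability of the reconstruction pattern that is correct exactly on a set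
S of positions, Π_{j∈S} c_j · Π_{j∉S} (1 − c_j), is at most A^r · B^{L−r} for
every natural number r ≤ |S|. -/
theorem stmt_10 (n : ℕ) (hn : 3 ≤ n)
    (ψ ε : ℝ) (hψ : ψ = (n : ℝ) - 1) (hε : 0 ≤ ε)
    (A B : ℝ)
    (hA : A = (ψ * Real.exp ε + 1) / (ψ * Real.exp ε + ψ ^ 2))
    (hB : B = ψ * Real.exp ε / (ψ * Real.exp ε + 1))
    (L : ℕ) (c : Fin L → ℝ)
    (hc : ∀ j, 1 / (1 + ψ * Real.exp ε) ≤ c j ∧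
      c j ≤ Real.exp ε / (Real.exp ε + ψ)) :
    ∀ (S : Finset (Fin L)) (r : ℕ), r ≤ S.card →
      (∏ j ∈ S, c j) * ∏ j ∈ Sᶜ, (1 - c j) ≤ A ^ r * B ^ (L - r) := by
  intro S r hr
  set x := Real.exp ε with hxdef
  have hx : 1 ≤ x := Real.one_le_exp hε
  have hψ2 : 2 ≤ ψ := by
    rw [hψ]
    have : (3 : ℝ) ≤ (n : ℝ) := by exact_mod_cast hn
    linarith
  have hψx : 2 ≤ ψ * x := by nlinarith
  have hd1 : 0 < 1 + ψ * x := by linarith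
  have hd2 : 0 < x + ψ := by linarith
  have hd3 : 0 < ψ * x + ψ ^ 2 := by nlinarith
  have hA0 : 0 ≤ A := by
    rw [hA]; positivity
  have hB0 : 0 ≤ B := by
    rw [hB]
    apply div_nonneg <;> nlinarith
  have hcA : ∀ j, c j ≤ A := by
    intro j
    have h := (hc j).2
    rw [hA]
    refine h.trans ?_
    rw [div_le_div_iff₀ hd2 hd3]
    nlinarith
  have hcB : ∀ j, 1 - c j ≤ B := by
    intro j
    have h := (hc j).1
    rw [hB]
    have : B = 1 - 1 / (1 + ψ * x) := by
      rw [hB]; field_simp; ring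
    rw [hB] at this
    rw [this]
    linarith
  have hc0 : ∀ j, 0 ≤ c j := by
    intro j
    have h := (hc j).1
    have : 0 < 1 / (1 + ψ * x) := by positivity
    linarith
  have hc1 : ∀ j, 0 ≤ 1 - c j := by
    intro j
    have h := (hc j).2
    have : x / (x + ψ) ≤ 1 := by
      rw [div_le_one hd2]; linarith
    linarith
  have hAB : A ≤ B := by
    rw [hA, hB, div_le_div_iff₀ hd3 (show (0:ℝ) < ψ * x + 1 by linarith)]
    nlinarith [mul_le_mul_of_nonneg_left (show (4:ℝ) ≤ ψ ^ 2 by nlinarith)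
      (show (0:ℝ) ≤ ψ * x by linarith)]
  have h1 : (∏ j ∈ S, c j) ≤ A ^ S.card := by
    calc (∏ j ∈ S, c j) ≤ ∏ _j ∈ S, A :=
          Finset.prod_le_prod (fun j _ => hc0 j) (fun j _ => hcA j)
      _ = A ^ S.card := by rw [Finset.prod_const]
  have h2 : (∏ j ∈ Sᶜ, (1 - c j)) ≤ B ^ Sᶜ.card := by
    calc (∏ j ∈ Sᶜ, (1 - c j)) ≤ ∏ _j ∈ Sᶜ, B :=
          Finset.prod_le_prod (fun j _ => hc1 j) (fun j _ => hcB j)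
      _ = B ^ Sᶜ.card := by rw [Finset.prod_const]
  have hprodnn : 0 ≤ ∏ j ∈ Sᶜ, (1 - c j) := Finset.prod_nonneg (fun j _ => hc1 j)
  have hstep : (∏ j ∈ S, c j) * ∏ j ∈ Sᶜ, (1 - c j) ≤ A ^ S.card * B ^ Sᶜ.card := by
    apply mul_le_mul h1 h2 hprodnn (by positivity)
  refine hstep.trans ?_
  -- card arithmetic
  have hcardc : Sᶜ.card = L - S.card := by
    have := Finset.card_compl S
    simpa using this
  have hSL : S.card ≤ L := by
    simpa using Finset.card_le_card (Finset.subset_univ S)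
  obtain ⟨k, hk⟩ : ∃ k, S.card = r + k := ⟨S.card - r, by omega⟩
  have hLr : L - r = k + (L - S.card) := by omega
  rw [hcardc, hk, hLr, pow_add, pow_add]
  have hcard2 : L - (r + k) = L - S.card := by omega
  rw [hcard2, ← mul_assoc]
  have hA_k : A ^ k ≤ B ^ k := pow_le_pow_left₀ hA0 hAB k
  exact mul_le_mul_of_nonneg_right
    (mul_le_mul_of_nonneg_left hA_k (pow_nonneg hA0 r)) (pow_nonneg hB0 (L - S.card))
end
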